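/- For each integer n ≥ 0, the classical Euler number satisfies E_n = Σ_{k=0}^{n} C(n,k) · Σ_{i=0}^{k} (−1)^i · i! · S(k,i) · 2^{k−i}. -/

import Mathlib

open Finset

/-- Stirling numbers of the second kind `S(n,k)`. -/
def stirling : ℕ → ℕ → ℕ
  | 0, 0 => 1
  | 0, _ + 1 => 0
  | _ + 1, 0 => 0
  | n + 1, k + 1 => (k + 1) * stirling n (k + 1) + stirling n k

/-- The classical Euler polynomial `E_n(x)`, defined by the generating function
`2 e^{xt}/(eᵗ+1) = ∑ E_n(x) tⁿ/n!`, i.e. as the `n`-th derivative at `t = 0`. -/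
noncomputable def eulerPoly (n : ℕ) (x : ℝ) : ℝ :=
  iteratedDeriv n (fun t => 2 * Real.exp (x * t) / (Real.exp t + 1)) 0

/-!
Write the generating function at `x = 1/2` as `(eᵗ+1)⁻¹ · 2e^{t/2}` and apply the Leibniz rule.
The `k`-th derivative of `(eᵗ+1)⁻¹` is `∑ᵢ (-1)ⁱ i! S(k,i) e^{it}/(eᵗ+1)^{i+1}`: the derivative of
`e^{it}/(eᵗ+1)^{i+1}` is `i` times itself minus `i+1` times the next term, which turns the
coefficients into those of the recurrence `S(k+1,i) = i S(k,i) + S(k,i-1)`. At `t = 0` the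
`i`-th term is `2^{-(i+1)}`, and together with the factor `2ⁿ (1/2)^{n-k}` from `e^{t/2}` this
gives `2^{k-i}`.
-/

open Real

lemma stirling_eq_zero_of_lt : ∀ {k i : ℕ}, k < i → stirling k i = 0
  | 0, _ + 1, _ => rfl
  | k + 1, i + 1, h => by
    simp only [stirling, stirling_eq_zero_of_lt (by omega : k < i + 1),
      stirling_eq_zero_of_lt (by omega : k < i), mul_zero, add_zero]

noncomputable def stirlingCoeff (k i : ℕ) : ℝ := (-1) ^ i * i.factorial * stirling k i

lemma stirlingCoeff_succ_zero (k : ℕ) : stirlingCoeff (k + 1) 0 = 0 := by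
  simp [stirlingCoeff, stirling]

lemma stirlingCoeff_eq_zero_of_lt {k i : ℕ} (h : k < i) : stirlingCoeff k i = 0 := by
  simp [stirlingCoeff, stirling_eq_zero_of_lt h]

lemma stirlingCoeff_succ_succ (k i : ℕ) :
    stirlingCoeff (k + 1) (i + 1) = (i + 1) * (stirlingCoeff k (i + 1) - stirlingCoeff k i) := by
  simp only [stirlingCoeff, stirling, Nat.factorial_succ]
  push_cast
  ring

noncomputable def expDivPow (i : ℕ) (t : ℝ) : ℝ := exp (i * t) / (exp t + 1) ^ (i + 1)

lemma expDivPow_zero (i : ℕ) : expDivPow i 0 = (2 ^ (i + 1))⁻¹ := by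
  norm_num [expDivPow]

lemma two_pow_succ_mul_expDivPow_zero {i k : ℕ} (h : i ≤ k) :
    2 ^ (k + 1) * expDivPow i 0 = 2 ^ (k - i) := by
  rw [expDivPow_zero, ← pow_sub₀ _ two_ne_zero (by omega : i + 1 ≤ k + 1), Nat.add_sub_add_right]

lemma hasDerivAt_expDivPow (i : ℕ) (t : ℝ) :
    HasDerivAt (expDivPow i) (i * expDivPow i t - (i + 1) * expDivPow (i + 1) t) t := by
  have hnum : HasDerivAt (fun t => exp (i * t)) (i * exp (i * t)) t := by
    simpa [mul_comm] using ((hasDerivAt_id t).const_mul (i : ℝ)).exp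
  have hden : HasDerivAt (fun t => (exp t + 1) ^ (i + 1))
      ((i + 1 : ℕ) * (exp t + 1) ^ i * exp t) t := by
    simpa using ((hasDerivAt_exp t).add_const 1).fun_pow (i + 1)
  refine (hnum.fun_div hden (by positivity)).congr_deriv ?_
  have hexp : exp ((i + 1 : ℝ) * t) = exp (i * t) * exp t := by
    rw [← exp_add]; ring_nf
  simp only [expDivPow, Nat.cast_add, Nat.cast_one, hexp]
  field_simp
  ring

lemma sum_stirlingCoeff_mul_deriv_expDivPow (k : ℕ) (t : ℝ) :
    ∑ i ∈ range (k + 1), stirlingCoeff k i * (i * expDivPow i t - (i + 1) * expDivPow (i + 1) t) =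
      ∑ i ∈ range (k + 2), stirlingCoeff (k + 1) i * expDivPow i t := by
  have hshift : ∑ i ∈ range (k + 1), (i : ℝ) * stirlingCoeff k i * expDivPow i t =
      ∑ i ∈ range (k + 1), ((i + 1 : ℕ) : ℝ) * stirlingCoeff k (i + 1) * expDivPow (i + 1) t := by
    calc _ = ∑ i ∈ range (k + 2), (i : ℝ) * stirlingCoeff k i * expDivPow i t := by
          rw [sum_range_succ _ (k + 1), stirlingCoeff_eq_zero_of_lt (lt_add_one k), mul_zero,
            zero_mul, add_zero]
      _ = _ := by simp [sum_range_succ' _ (k + 1)]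
  rw [sum_range_succ' _ (k + 1), stirlingCoeff_succ_zero, zero_mul, add_zero]
  calc _ = ∑ i ∈ range (k + 1), (i : ℝ) * stirlingCoeff k i * expDivPow i t -
        ∑ i ∈ range (k + 1), ((i : ℝ) + 1) * stirlingCoeff k i * expDivPow (i + 1) t := by
        rw [← sum_sub_distrib]
        exact sum_congr rfl fun i _ => by ring
    _ = _ := by
        rw [hshift, ← sum_sub_distrib]
        refine sum_congr rfl fun i _ => ?_
        rw [stirlingCoeff_succ_succ]
        push_cast
        ring

lemma iteratedDeriv_inv_exp_add_one (k : ℕ) :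
    iteratedDeriv k (fun t => (exp t + 1)⁻¹) =
      fun t => ∑ i ∈ range (k + 1), stirlingCoeff k i * expDivPow i t := by
  induction k with
  | zero => ext t; simp [stirlingCoeff, stirling, expDivPow]
  | succ k ih =>
    ext t
    rw [iteratedDeriv_succ, ih, ← sum_stirlingCoeff_mul_deriv_expDivPow]
    exact (HasDerivAt.fun_sum fun i _ => (hasDerivAt_expDivPow i t).const_mul _).deriv

theorem eulerNumber_closed_form (n : ℕ) :
    2 ^ n * eulerPoly n (1 / 2) =
      ∑ k ∈ Finset.range (n + 1), (n.choose k : ℝ) *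
        ∑ i ∈ Finset.range (k + 1),
          (-1 : ℝ) ^ i * (i.factorial : ℝ) * (stirling k i : ℝ) * 2 ^ (k - i) := by
  have hsplit : (fun t => 2 * exp (1 / 2 * t) / (exp t + 1)) =
      fun t => (exp t + 1)⁻¹ * (2 * exp (1 / 2 * t)) := by
    ext t; ring
  have hinv : ContDiff ℝ n (fun t => (exp t + 1)⁻¹) :=
    (contDiff_exp.add contDiff_const).inv fun t => by positivity
  have hexp : ContDiff ℝ n (fun t => 2 * exp (1 / 2 * t)) := by fun_prop
  rw [eulerPoly, hsplit, iteratedDeriv_fun_mul hinv.contDiffAt hexp.contDiffAt, mul_sum]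
  refine sum_congr rfl fun k hk => ?_
  have hkn : k ≤ n := Nat.lt_succ_iff.mp (mem_range.mp hk)
  simp only [iteratedDeriv_const_mul_field, iteratedDeriv_exp_const_mul,
    iteratedDeriv_inv_exp_add_one]
  have hscale : 2 ^ n * (2 * ((1 / 2) ^ (n - k) * exp (1 / 2 * 0))) = (2 : ℝ) ^ (k + 1) := by
    rw [mul_zero, exp_zero, mul_one, ← pow_sub_mul_pow (2 : ℝ) hkn, one_div, inv_pow]
    field_simp
    ring
  rw [show ∀ a b c : ℝ, 2 ^ n * (a * b * c) = a * (2 ^ n * c * b) by intros; ring, hscale, mul_sum]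
  refine congrArg _ (sum_congr rfl fun i hi => ?_)
  rw [mul_left_comm, two_pow_succ_mul_expDivPow_zero (Nat.lt_succ_iff.mp (mem_range.mp hi)),
    stirlingCoeff]
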